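/- arXiv:1808.01380 — 7 statements merged into one kernel-verified Lean document; each statement's English description precedes it below -/
import Mathlib

section
/- If a nonzero symmetric operator Ric on an n-dimensional real inner product space satisfies (tr Ric)^2/|Ric|^2 > n-1, then Ric is definite (all eigenvalues have the same sign). -/
/-!
In an orthonormal eigenbasis, `⟪Ric x, x⟫ = ∑ μᵢ ⟪bᵢ, x⟫²` and `tr Ric = S = ∑ μᵢ`,
`tr (Ric ∘ Ric) = ∑ μᵢ²`, so it suffices that every `μᵢ S` is positive. If some `μᵢ` had sign
opposite to `S`, dropping it would not decrease `S²`, and Cauchy–Schwarz on the remaining `n - 1`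
eigenvalues would give `S² ≤ (n - 1) ∑ μᵢ²`.
-/

open Finset Module LinearMap
open scoped RealInnerProductSpace

theorem mul_sum_pos_of_card_sub_one_lt_sq_sum_div {ι : Type*} [Fintype ι] (μ : ι → ℝ)
    (h : (Fintype.card ι : ℝ) - 1 < (∑ j, μ j) ^ 2 / ∑ j, μ j ^ 2) (i : ι) :
    0 < μ i * ∑ j, μ j := by
  classical
  by_contra! hle
  have hcard : (1 : ℝ) ≤ Fintype.card ι := by
    exact_mod_cast Fintype.card_pos_iff.mpr ⟨i⟩
  have hQ : 0 < ∑ j, μ j ^ 2 := by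
    rcases (sum_nonneg fun j _ => sq_nonneg (μ j)).eq_or_lt with hQ | hQ
    · rw [← hQ, div_zero] at h
      linarith
    · exact hQ
  have hlt : ((Fintype.card ι : ℝ) - 1) * ∑ j, μ j ^ 2 < (∑ j, μ j) ^ 2 := (lt_div_iff₀ hQ).mp h
  have hdrop : (∑ j, μ j) ^ 2 ≤ (∑ j, μ j - μ i) ^ 2 := by nlinarith [sq_nonneg (μ i)]
  have hCS : (∑ j, μ j - μ i) ^ 2 ≤ ((Fintype.card ι : ℝ) - 1) * (∑ j, μ j ^ 2 - μ i ^ 2) := by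
    have := sq_sum_le_card_mul_sum_sq (s := univ.erase i) (f := μ)
    rwa [sum_erase_eq_sub (mem_univ i), sum_erase_eq_sub (mem_univ i),
      card_erase_of_mem (mem_univ i), card_univ, Nat.cast_sub (by exact_mod_cast hcard),
      Nat.cast_one] at this
  nlinarith [mul_nonneg (sub_nonneg.mpr hcard) (sq_nonneg (μ i))]

namespace LinearMap.IsSymmetric

variable {E : Type*} [NormedAddCommGroup E] [InnerProductSpace ℝ E] [FiniteDimensional ℝ E]
  {T : E →ₗ[ℝ] E} (hT : T.IsSymmetric)

include hT

theorem trace_comp_self_eq_sum_sq_eigenvalues :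
    trace ℝ E (T ∘ₗ T) = ∑ i, hT.eigenvalues rfl i ^ 2 := by
  rw [trace_eq_sum_inner _ (hT.eigenvectorBasis rfl)]
  refine sum_congr rfl fun i _ => ?_
  rw [comp_apply, ← hT, hT.apply_eigenvectorBasis, real_inner_smul_left, real_inner_smul_right,
    real_inner_self_eq_norm_sq, (hT.eigenvectorBasis rfl).orthonormal.1 i,
    RCLike.ofReal_real_eq_id, id_eq]
  ring

theorem inner_map_self_eq_sum_eigenvalues_mul_sq (x : E) :
    ⟪T x, x⟫ = ∑ i, hT.eigenvalues rfl i * ⟪hT.eigenvectorBasis rfl i, x⟫ ^ 2 := by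
  rw [← (hT.eigenvectorBasis rfl).sum_inner_mul_inner]
  refine sum_congr rfl fun i _ => ?_
  rw [hT, hT.apply_eigenvectorBasis, real_inner_smul_right, real_inner_comm x,
    RCLike.ofReal_real_eq_id, id_eq]
  ring

theorem trace_mul_inner_map_self_pos
    (h : (finrank ℝ E : ℝ) - 1 < (trace ℝ E T) ^ 2 / trace ℝ E (T ∘ₗ T)) {x : E} (hx : x ≠ 0) :
    0 < trace ℝ E T * ⟪T x, x⟫ := by
  set b := hT.eigenvectorBasis rfl
  set μ := hT.eigenvalues rfl
  have htr : trace ℝ E T = ∑ i, μ i := hT.trace_eq_sum_eigenvalues rfl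
  rw [htr, hT.trace_comp_self_eq_sum_sq_eigenvalues] at h
  rw [htr]
  have hμ := mul_sum_pos_of_card_sub_one_lt_sq_sum_div μ (by simpa using h)
  obtain ⟨j, hj⟩ : ∃ j, ⟪b j, x⟫ ≠ 0 := by
    by_contra! h0
    exact hx (b.repr.map_eq_zero_iff.mp (by ext j; simp [b.repr_apply_apply, h0 j]))
  rw [hT.inner_map_self_eq_sum_eigenvalues_mul_sq, mul_sum]
  refine sum_pos' (fun i _ => ?_) ⟨j, mem_univ j, ?_⟩
  · nlinarith [hμ i, sq_nonneg ⟪b i, x⟫]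
  · nlinarith [hμ j, sq_pos_of_ne_zero hj]

end LinearMap.IsSymmetric

theorem stmt_1_general (n : ℕ)
    (Ric : EuclideanSpace ℝ (Fin n) →ₗ[ℝ] EuclideanSpace ℝ (Fin n))
    (hsym : LinearMap.IsSymmetric Ric)
    (hF : (n : ℝ) - 1 < (LinearMap.trace ℝ _ Ric) ^ 2 / (LinearMap.trace ℝ _ (Ric ∘ₗ Ric))) :
    (∀ x : EuclideanSpace ℝ (Fin n), x ≠ 0 → (0:ℝ) < inner ℝ (Ric x) x) ∨
    (∀ x : EuclideanSpace ℝ (Fin n), x ≠ 0 → (inner ℝ (Ric x) x : ℝ) < 0) := by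
  have key := fun x (hx : x ≠ 0) =>
    hsym.trace_mul_inner_map_self_pos (by rwa [finrank_euclideanSpace_fin]) hx
  rcases le_or_gt (LinearMap.trace ℝ _ Ric) 0 with hneg | hpos
  · exact Or.inr fun x hx => neg_of_mul_pos_right (key x hx) hneg
  · exact Or.inl fun x hx => pos_of_mul_pos_right (key x hx) hpos.le

/-- If a nonzero symmetric operator `Ric` on an `n`-dimensional real inner
product space satisfies `(tr Ric)² / |Ric|² > n - 1`, then `Ric` is definite, i.e. the
associated quadratic form `x ↦ ⟪Ric x, x⟫` is either positive or negative on all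
nonzero vectors. -/
theorem stmt_1 (n : ℕ) (hn : 1 ≤ n)
    (Ric : EuclideanSpace ℝ (Fin n) →ₗ[ℝ] EuclideanSpace ℝ (Fin n))
    (hsym : LinearMap.IsSymmetric Ric) (hne : Ric ≠ 0)
    (hF : (n : ℝ) - 1 < (LinearMap.trace ℝ _ Ric) ^ 2 / (LinearMap.trace ℝ _ (Ric ∘ₗ Ric))) :
    (∀ x : EuclideanSpace ℝ (Fin n), x ≠ 0 → (0:ℝ) < inner ℝ (Ric x) x) ∨
    (∀ x : EuclideanSpace ℝ (Fin n), x ≠ 0 → (inner ℝ (Ric x) x : ℝ) < 0) :=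
  stmt_1_general n Ric hsym hF
end

section
/- For any matrix A ∈ M_{n-1}(ℝ) with symmetric part S(A) = (A+Aᵀ)/2 nonzero, the quantity F(A) = (tr S(A)² + (tr A)²)² / (tr S(A)² (tr S(A)² + (tr A)²) + (1/4)|[A,Aᵀ]|²) satisfies F(A) ≤ 1 + (tr A)²/tr S(A)² ≤ n, where equality in the first inequality holds if and only if A is normal (i.e. [A,Aᵀ] = 0). -/
open Matrix

/-- Symmetric part `S(A) = (A + Aᵀ)/2`. -/
noncomputable def Ssym {m : ℕ} (A : Matrix (Fin m) (Fin m) ℝ) : Matrix (Fin m) (Fin m) ℝ :=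
  (1 / 2 : ℝ) • (A + Aᵀ)

/-- Commutator of matrices. -/
def brk {m : ℕ} (X Y : Matrix (Fin m) (Fin m) ℝ) : Matrix (Fin m) (Fin m) ℝ :=
  X * Y - Y * X

/-- Squared norm `|X|² = tr (X Xᵀ)`. -/
noncomputable def nsq {m : ℕ} (X : Matrix (Fin m) (Fin m) ℝ) : ℝ :=
  (X * Xᵀ).trace

/-- The Ricci pinching functional of the almost-abelian solvmanifold attached to `A`:
`F(A) = (tr S(A)² + (tr A)²)² / (tr S(A)² (tr S(A)² + (tr A)²) + ¼|[A,Aᵀ]|²)`. -/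
noncomputable def Fpinch {m : ℕ} (A : Matrix (Fin m) (Fin m) ℝ) : ℝ :=
  ((Ssym A * Ssym A).trace + A.trace ^ 2) ^ 2 /
    ((Ssym A * Ssym A).trace * ((Ssym A * Ssym A).trace + A.trace ^ 2)
      + (1 / 4) * nsq (brk A Aᵀ))

/-!
Write `s = tr S(A)²`, `t = tr A` and `q = ¼|[A,Aᵀ]|² ≥ 0`. Then `F(A) = (s + t²)² / (s (s + t²) + q)`
and `1 + t²/s = (s + t²)/s`, so the first inequality only drops `q`, with equality iff `q = 0`,
i.e. iff `A` is normal. Since `S(A)` is symmetric, `s = |S(A)|² > 0`, and `t = tr S(A)`, so the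
second inequality is Cauchy–Schwarz on the diagonal of `S(A)`: `(tr S)² ≤ m ∑ᵢ Sᵢᵢ² ≤ m |S|²`.
-/

section FrobeniusSquare

variable {n : Type*} [Fintype n]

lemma trace_mul_transpose_self_nonneg (X : Matrix n n ℝ) : 0 ≤ (X * Xᵀ).trace := by
  simpa [conjTranspose_eq_transpose_of_trivial] using
    (posSemidef_self_mul_conjTranspose X).trace_nonneg

lemma trace_mul_transpose_self_eq_zero_iff {X : Matrix n n ℝ} : (X * Xᵀ).trace = 0 ↔ X = 0 := by
  simpa [conjTranspose_eq_transpose_of_trivial] using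
    trace_mul_conjTranspose_self_eq_zero_iff (A := X)

lemma trace_mul_transpose_self_eq_sum_sq (X : Matrix n n ℝ) :
    (X * Xᵀ).trace = ∑ i, ∑ j, X i j ^ 2 := by
  simp [Matrix.trace, Matrix.mul_apply, sq]

lemma sq_trace_le_card_mul_trace_mul_transpose_self (X : Matrix n n ℝ) :
    X.trace ^ 2 ≤ Fintype.card n * (X * Xᵀ).trace := by
  have hdiag : ∑ i, X i i ^ 2 ≤ (X * Xᵀ).trace := by
    rw [trace_mul_transpose_self_eq_sum_sq]
    gcongr with i
    exact Finset.single_le_sum (f := fun j => X i j ^ 2) (fun j _ => sq_nonneg _)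
      (Finset.mem_univ i)
  calc X.trace ^ 2 = (∑ i, X i i) ^ 2 := rfl
    _ ≤ Fintype.card n * ∑ i, X i i ^ 2 := by
      simpa using sq_sum_le_card_mul_sum_sq (s := Finset.univ) (f := fun i => X i i)
    _ ≤ Fintype.card n * (X * Xᵀ).trace := by gcongr

end FrobeniusSquare

lemma transpose_Ssym {m : ℕ} (A : Matrix (Fin m) (Fin m) ℝ) : (Ssym A)ᵀ = Ssym A := by
  simp [Ssym, add_comm]

lemma trace_Ssym {m : ℕ} (A : Matrix (Fin m) (Fin m) ℝ) : (Ssym A).trace = A.trace := by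
  simp [Ssym]
  ring

lemma trace_Ssym_mul_self_pos {m : ℕ} {A : Matrix (Fin m) (Fin m) ℝ} (hS : Ssym A ≠ 0) :
    0 < (Ssym A * Ssym A).trace := by
  have h := (trace_mul_transpose_self_nonneg (Ssym A)).lt_of_ne'
    (trace_mul_transpose_self_eq_zero_iff.not.mpr hS)
  rwa [transpose_Ssym] at h

lemma sq_trace_le_mul_trace_Ssym_mul_self {m : ℕ} (A : Matrix (Fin m) (Fin m) ℝ) :
    A.trace ^ 2 ≤ m * (Ssym A * Ssym A).trace := by
  simpa [trace_Ssym, transpose_Ssym] using sq_trace_le_card_mul_trace_mul_transpose_self (Ssym A)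

lemma nsq_brk_transpose_eq_zero_iff {m : ℕ} {A : Matrix (Fin m) (Fin m) ℝ} :
    nsq (brk A Aᵀ) = 0 ↔ A * Aᵀ = Aᵀ * A := by
  rw [nsq, trace_mul_transpose_self_eq_zero_iff, brk, sub_eq_zero]

section Pinching

variable {s P q : ℝ}

lemma sq_div_mul_add_le_div (hs : 0 < s) (hP : 0 < P) (hq : 0 ≤ q) :
    P ^ 2 / (s * P + q) ≤ P / s := by
  rw [div_le_div_iff₀ (by positivity) hs]
  nlinarith [mul_nonneg hP.le hq]

lemma sq_div_mul_add_eq_div_iff (hs : 0 < s) (hP : 0 < P) (hq : 0 ≤ q) :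
    P ^ 2 / (s * P + q) = P / s ↔ q = 0 := by
  rw [div_eq_div_iff (by positivity) hs.ne']
  constructor
  · intro h
    have : P * q = 0 := by linear_combination -h
    exact (mul_eq_zero.mp this).resolve_left hP.ne'
  · rintro rfl
    ring

end Pinching

/-- For `A ∈ M_{n-1}(ℝ)` (here of size `m = n - 1`, so the ambient dimension
is `n = m + 1`) with `S(A) ≠ 0`, one has `F(A) ≤ 1 + (tr A)²/tr S(A)² ≤ n`, with equality
in the first inequality iff `A` is normal, i.e. `[A, Aᵀ] = 0`. -/
theorem stmt_3 (m : ℕ) (A : Matrix (Fin m) (Fin m) ℝ) (hS : Ssym A ≠ 0) :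
    Fpinch A ≤ 1 + A.trace ^ 2 / (Ssym A * Ssym A).trace ∧
    1 + A.trace ^ 2 / (Ssym A * Ssym A).trace ≤ (m + 1 : ℝ) ∧
    (Fpinch A = 1 + A.trace ^ 2 / (Ssym A * Ssym A).trace ↔ A * Aᵀ = Aᵀ * A) := by
  have hs := trace_Ssym_mul_self_pos hS
  have hP : 0 < (Ssym A * Ssym A).trace + A.trace ^ 2 := by positivity
  have hq : 0 ≤ (1 / 4 : ℝ) * nsq (brk A Aᵀ) :=
    mul_nonneg (by norm_num) (trace_mul_transpose_self_nonneg _)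
  have hrhs : 1 + A.trace ^ 2 / (Ssym A * Ssym A).trace =
      ((Ssym A * Ssym A).trace + A.trace ^ 2) / (Ssym A * Ssym A).trace := by
    field_simp
  rw [hrhs]
  refine ⟨sq_div_mul_add_le_div hs hP hq, ?_, ?_⟩
  · rw [div_le_iff₀ hs]
    linarith [sq_trace_le_mul_trace_Ssym_mul_self A]
  · rw [Fpinch, sq_div_mul_add_eq_div_iff hs hP hq, mul_eq_zero, or_iff_right (by norm_num),
      nsq_brk_transpose_eq_zero_iff]
end

section
/- For the family of 2×2 matrices A_s = [[1, s],[0, 1]], the value F(A_s) tends to 3 as s → 0 (and F(A_s) < 3 for s ≠ 0), where F is the Ricci pinching functional of the corresponding 3-dimensional almost-abelian solvmanifold. -/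
open Matrix

/-- For `A_s = [[1, s], [0, 1]]`, `F(A_s) → 3` as `s → 0`,
and `F(A_s) < 3` for all `s ≠ 0`. -/
theorem stmt_5 :
    Filter.Tendsto (fun s : ℝ => Fpinch !![1, s; 0, 1]) (nhds 0) (nhds 3) ∧
    ∀ s : ℝ, s ≠ 0 → Fpinch !![1, s; 0, 1] < 3 := by
  have key : ∀ s : ℝ, Fpinch !![1, s; 0, 1]
      = (144 + 24 * s ^ 2 + s ^ 4) / (48 + 16 * s ^ 2 + 3 * s ^ 4) := by
    intro s
    have hd : (48 + 16 * s ^ 2 + 3 * s ^ 4) > 0 := by positivity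
    simp only [Fpinch, Ssym, brk, nsq, Matrix.trace_fin_two, Matrix.transpose_apply,
      Matrix.mul_apply, Fin.sum_univ_two, Matrix.smul_apply, Matrix.add_apply,
      Matrix.sub_apply, Matrix.transpose, Matrix.of_apply, Matrix.cons_val',
      Matrix.cons_val_zero, Matrix.cons_val_one, Matrix.head_cons, Matrix.head_fin_const,
      smul_eq_mul]
    rw [div_eq_div_iff (by nlinarith) (by positivity)]
    ring
  have hpos : ∀ s : ℝ, (48 + 16 * s ^ 2 + 3 * s ^ 4 : ℝ) > 0 := fun s => by positivity
  constructor
  · simp only [key]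
    have : Filter.Tendsto (fun s : ℝ => (144 + 24 * s ^ 2 + s ^ 4) / (48 + 16 * s ^ 2 + 3 * s ^ 4))
        (nhds 0) (nhds ((144 + 24 * 0 ^ 2 + 0 ^ 4) / (48 + 16 * 0 ^ 2 + 3 * 0 ^ 4))) := by
      apply Filter.Tendsto.div
      · exact Continuous.tendsto (by continuity) 0
      · exact Continuous.tendsto (by continuity) 0
      · norm_num
    convert this using 2
    norm_num
  · intro s hs
    rw [key, div_lt_iff₀ (hpos s)]
    nlinarith [sq_nonneg s, sq_pos_of_ne_zero hs, sq_nonneg (s^2)]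
end

section
/- For A_t = [[t, -1],[1, -t]] with 0 < t < 1, one has F(A_t) = t⁴/(t⁴ + 2t²), hence F(A_t) → 0 as t → 0. -/
/-! For `A_t = [[t, -1], [1, -t]]` the trace vanishes, `S(A_t) = diag(t, -t)` and
`[A_t, A_tᵀ] = [[0, 4t], [4t, 0]]`, so `F(A_t) = 4t⁴ / (4t⁴ + 8t²) = t² / (t² + 2)`,
a continuous function vanishing at `0`. -/

open Matrix

lemma transpose_fin_two_of {α : Type*} (a b c d : α) : !![a, b; c, d]ᵀ = !![a, c; b, d] := by
  ext i j; fin_cases i <;> fin_cases j <;> rfl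

section

variable (a b c d : ℝ)

lemma Ssym_fin_two : Ssym !![a, b; c, d] = !![a, (b + c) / 2; (b + c) / 2, d] := by
  ext i j; fin_cases i <;> fin_cases j <;> simp [Ssym] <;> ring

lemma trace_Ssym_mul_self_fin_two :
    (Ssym !![a, b; c, d] * Ssym !![a, b; c, d]).trace = a ^ 2 + d ^ 2 + (b + c) ^ 2 / 2 := by
  rw [Ssym_fin_two, mul_fin_two, trace_fin_two_of]; ring

lemma brk_self_transpose_fin_two :
    brk !![a, b; c, d] !![a, b; c, d]ᵀ =
      !![b ^ 2 - c ^ 2, (a - d) * (c - b); (a - d) * (c - b), c ^ 2 - b ^ 2] := by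
  rw [brk, transpose_fin_two_of, mul_fin_two, mul_fin_two]
  ext i j; fin_cases i <;> fin_cases j <;> simp <;> ring

lemma nsq_brk_self_transpose_fin_two :
    nsq (brk !![a, b; c, d] !![a, b; c, d]ᵀ) =
      2 * (b ^ 2 - c ^ 2) ^ 2 + 2 * ((a - d) * (b - c)) ^ 2 := by
  rw [brk_self_transpose_fin_two, nsq, transpose_fin_two_of, mul_fin_two, trace_fin_two_of]
  ring

lemma Fpinch_fin_two : Fpinch !![a, b; c, d] =
    (a ^ 2 + d ^ 2 + (b + c) ^ 2 / 2 + (a + d) ^ 2) ^ 2 /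
      ((a ^ 2 + d ^ 2 + (b + c) ^ 2 / 2) * (a ^ 2 + d ^ 2 + (b + c) ^ 2 / 2 + (a + d) ^ 2)
        + ((b ^ 2 - c ^ 2) ^ 2 + ((a - d) * (b - c)) ^ 2) / 2) := by
  rw [Fpinch, trace_Ssym_mul_self_fin_two, trace_fin_two_of, nsq_brk_self_transpose_fin_two]
  ring

end

lemma Fpinch_At (t : ℝ) : Fpinch !![t, -1; 1, -t] = t ^ 4 / (t ^ 4 + 2 * t ^ 2) := by
  rw [Fpinch_fin_two, ← mul_div_mul_left (t ^ 4) _ (four_ne_zero (α := ℝ))]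
  ring_nf

lemma Fpinch_At_eq_div (t : ℝ) : Fpinch !![t, -1; 1, -t] = t ^ 2 / (t ^ 2 + 2) := by
  rw [Fpinch_At]
  rcases eq_or_ne t 0 with rfl | ht
  · simp
  · rw [← mul_div_mul_left (t ^ 2) _ (pow_ne_zero 2 ht)]
    ring_nf

/-- For `A_t = [[t, -1], [1, -t]]` with `0 < t < 1`,
`F(A_t) = t⁴/(t⁴ + 2t²)`, hence `F(A_t) → 0` as `t → 0⁺`. -/
theorem stmt_6 :
    (∀ t : ℝ, 0 < t → t < 1 → Fpinch !![t, -1; 1, -t] = t ^ 4 / (t ^ 4 + 2 * t ^ 2)) ∧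
    Filter.Tendsto (fun t : ℝ => Fpinch !![t, -1; 1, -t])
      (nhdsWithin 0 (Set.Ioo 0 1)) (nhds 0) := by
  refine ⟨fun t _ _ => Fpinch_At t, ?_⟩
  simp_rw [Fpinch_At_eq_div]
  have hcont : Continuous fun t : ℝ => t ^ 2 / (t ^ 2 + 2) :=
    Continuous.div₀ (by fun_prop) (by fun_prop) fun t => by positivity
  simpa using (hcont.tendsto 0).mono_left nhdsWithin_le_nhds
end

section
/- For the 3×3 matrices C_t = diag-block([[t,-1],[1,-t]], [t]) with t > 0, F(C_t) = 4t⁴/(3t⁴ + 2t²), which tends to 0 as t → 0⁺. -/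
open Matrix

/-!
`S(C_t) = diag(t, -t, t)`, `tr C_t = t` and `[C_t, C_tᵀ]` has only the two entries `4t` off the
diagonal, so the three ingredients of `F` are `3t²`, `t` and `32t²`. Hence
`F(C_t) = (4t²)² / (12t⁴ + 8t²) = 4t²/(3t² + 2)`, a continuous function of `t` vanishing at `0`.
-/

lemma nsq_eq_sum_sq {m : ℕ} (X : Matrix (Fin m) (Fin m) ℝ) : nsq X = ∑ i, ∑ j, X i j ^ 2 := by
  simp only [nsq, trace, diag_apply, mul_apply, transpose_apply, sq]

lemma trace_Ssym_mul_self {m : ℕ} (A : Matrix (Fin m) (Fin m) ℝ) :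
    (Ssym A * Ssym A).trace = nsq (Ssym A) := by
  rw [nsq, transpose_Ssym]

def matrixC (t : ℝ) : Matrix (Fin 3) (Fin 3) ℝ := !![t, -1, 0; 1, -t, 0; 0, 0, t]

lemma transpose_matrixC (t : ℝ) : (matrixC t)ᵀ = !![t, 1, 0; -1, -t, 0; 0, 0, t] := by
  ext i j; fin_cases i <;> fin_cases j <;> rfl

lemma Ssym_matrixC (t : ℝ) : Ssym (matrixC t) = !![t, 0, 0; 0, -t, 0; 0, 0, t] := by
  rw [Ssym, transpose_matrixC, matrixC]
  ext i j; fin_cases i <;> fin_cases j <;> simp <;> ring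

lemma trace_Ssym_mul_self_matrixC (t : ℝ) :
    (Ssym (matrixC t) * Ssym (matrixC t)).trace = 3 * t ^ 2 := by
  rw [trace_Ssym_mul_self, nsq_eq_sum_sq, Ssym_matrixC]
  simp [Fin.sum_univ_three]
  ring

lemma trace_matrixC (t : ℝ) : (matrixC t).trace = t := by
  simp [matrixC, trace_fin_three]

lemma brk_matrixC_transpose (t : ℝ) :
    brk (matrixC t) (matrixC t)ᵀ = !![0, 4 * t, 0; 4 * t, 0, 0; 0, 0, 0] := by
  rw [brk, transpose_matrixC, matrixC, mul_fin_three, mul_fin_three]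
  ext i j; fin_cases i <;> fin_cases j <;> simp <;> ring

lemma nsq_brk_matrixC_transpose (t : ℝ) : nsq (brk (matrixC t) (matrixC t)ᵀ) = 32 * t ^ 2 := by
  simp [nsq_eq_sum_sq, brk_matrixC_transpose, Fin.sum_univ_three]
  ring

lemma Fpinch_matrixC (t : ℝ) : Fpinch (matrixC t) = 4 * t ^ 2 / (3 * t ^ 2 + 2) := by
  rw [Fpinch, trace_Ssym_mul_self_matrixC, trace_matrixC, nsq_brk_matrixC_transpose]
  rcases eq_or_ne t 0 with rfl | ht
  · simp
  · have ht2 : t ^ 2 ≠ 0 := pow_ne_zero 2 ht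
    field_simp
    ring

lemma tendsto_Fpinch_matrixC : Filter.Tendsto (fun t => Fpinch (matrixC t))
    (nhdsWithin 0 (Set.Ioi 0)) (nhds 0) := by
  have hcont : Continuous fun t : ℝ => 4 * t ^ 2 / (3 * t ^ 2 + 2) :=
    by fun_prop (disch := intro t; positivity)
  simpa [Fpinch_matrixC] using (hcont.tendsto 0).mono_left nhdsWithin_le_nhds

/-- For the 3×3 matrices `C_t = diag-block([[t,-1],[1,-t]], [t])` with `t > 0`,
`F(C_t) = 4t⁴/(3t⁴ + 2t²)`, which tends to `0` as `t → 0⁺`. -/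
theorem stmt_8 :
    (∀ t : ℝ, 0 < t →
      Fpinch !![t, -1, 0; 1, -t, 0; 0, 0, t] = 4 * t ^ 4 / (3 * t ^ 4 + 2 * t ^ 2)) ∧
    Filter.Tendsto (fun t : ℝ => Fpinch !![t, -1, 0; 1, -t, 0; 0, 0, t])
      (nhdsWithin 0 (Set.Ioi 0)) (nhds 0) := by
  refine ⟨fun t ht => ?_, tendsto_Fpinch_matrixC⟩
  rw [← matrixC, Fpinch_matrixC, ← mul_div_mul_right _ _ (pow_ne_zero 2 ht.ne')]
  ring
end

section
/- For any nonzero B ∈ M_m(ℝ), |[B,Bᵀ]|/|B|² ≤ √2, with equality if and only if B is nilpotent of rank 1. -/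
open Matrix

/- ## Auxiliary lemmas -/

lemma nsq_eq_sum {m : ℕ} (X : Matrix (Fin m) (Fin m) ℝ) :
    nsq X = ∑ i, ∑ j, (X i j)^2 := by
  simp [nsq, Matrix.trace, Matrix.mul_apply, Matrix.diag, sq]

lemma nsq_nonneg {m : ℕ} (X : Matrix (Fin m) (Fin m) ℝ) : 0 ≤ nsq X := by
  rw [nsq_eq_sum]; positivity

lemma nsq_eq_zero_iff {m : ℕ} (X : Matrix (Fin m) (Fin m) ℝ) : nsq X = 0 ↔ X = 0 := by
  rw [nsq_eq_sum]
  constructor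
  · intro h
    ext i j
    have h1 : ∀ i ∈ Finset.univ, (0:ℝ) ≤ ∑ j, (X i j)^2 := by intros; positivity
    have := (Finset.sum_eq_zero_iff_of_nonneg h1).mp h i (Finset.mem_univ i)
    have h2 : ∀ j ∈ Finset.univ, (0:ℝ) ≤ (X i j)^2 := by intros; positivity
    have := (Finset.sum_eq_zero_iff_of_nonneg h2).mp this j (Finset.mem_univ j)
    simpa [sq] using this
  · intro h; simp [h]

lemma trace_sq_of_spectral {m : ℕ} (A U : Matrix (Fin m) (Fin m) ℝ) (d : Fin m → ℝ)
    (hUU : star U * U = 1) (h : A = U * Matrix.diagonal d * star U) :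
    A.trace = ∑ i, d i ∧ (A * A).trace = ∑ i, d i ^ 2 := by
  constructor
  · rw [h, Matrix.trace_mul_cycle, hUU, Matrix.one_mul, Matrix.trace_diagonal]
  · have key : A * A = U * (Matrix.diagonal d * Matrix.diagonal d) * star U := by
      rw [h, show U * Matrix.diagonal d * star U * (U * Matrix.diagonal d * star U)
        = U * (Matrix.diagonal d * (star U * U) * Matrix.diagonal d) * star U by noncomm_ring,
        hUU]
      noncomm_ring
    rw [key, Matrix.trace_mul_cycle, hUU, Matrix.one_mul,
      Matrix.diagonal_mul_diagonal, Matrix.trace_diagonal]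
    simp [sq]

lemma trace_herm {m : ℕ} (A : Matrix (Fin m) (Fin m) ℝ) (hA : A.IsHermitian) :
    A.trace = ∑ i, hA.eigenvalues i ∧ (A * A).trace = ∑ i, hA.eigenvalues i ^ 2 := by
  refine trace_sq_of_spectral A _ hA.eigenvalues
    (Matrix.mem_unitaryGroup_iff'.mp hA.eigenvectorUnitary.2) ?_
  simpa using hA.spectral_theorem

lemma brk_identity {m : ℕ} (B : Matrix (Fin m) (Fin m) ℝ) :
    nsq (brk B Bᵀ) = 2 * ((B * Bᵀ) * (B * Bᵀ)).trace - 2 * nsq (B * B) := by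
  have h1 : (brk B Bᵀ)ᵀ = brk B Bᵀ := by
    simp [brk, Matrix.transpose_sub, Matrix.transpose_mul]
  rw [nsq, h1]
  have expand : brk B Bᵀ * brk B Bᵀ
      = (B * Bᵀ) * (B * Bᵀ) - (B * Bᵀ) * (Bᵀ * B) - (Bᵀ * B) * (B * Bᵀ)
        + (Bᵀ * B) * (Bᵀ * B) := by
    simp [brk]; noncomm_ring
  rw [expand]
  rw [Matrix.trace_add, Matrix.trace_sub, Matrix.trace_sub]
  have e1 : ((Bᵀ * B) * (Bᵀ * B)).trace = ((B * Bᵀ) * (B * Bᵀ)).trace := by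
    rw [show (Bᵀ * B) * (Bᵀ * B) = Bᵀ * (B * Bᵀ * B) by noncomm_ring,
      Matrix.trace_mul_comm]
    congr 1; noncomm_ring
  have e2 : ((B * Bᵀ) * (Bᵀ * B)).trace = nsq (B * B) := by
    rw [nsq, Matrix.transpose_mul,
      show (B * Bᵀ) * (Bᵀ * B) = (B * Bᵀ * Bᵀ) * B by noncomm_ring,
      Matrix.trace_mul_comm]
    congr 1; noncomm_ring
  have e3 : ((Bᵀ * B) * (B * Bᵀ)).trace = nsq (B * B) := by
    rw [← e2, Matrix.trace_mul_comm]
  rw [e1, e2, e3]; ring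

lemma sq_zero_of_nilpotent_rank_one {m : ℕ} (B : Matrix (Fin m) (Fin m) ℝ)
    (hn : IsNilpotent B) (hr : B.rank = 1) : B * B = 0 := by
  have hr' : Module.finrank ℝ (LinearMap.range B.mulVecLin) = 1 := hr
  obtain ⟨v, hv0, hv⟩ := (finrank_eq_one_iff').mp hr'
  set u : Fin m → ℝ := (v : Fin m → ℝ) with hu
  have hu0 : u ≠ 0 := fun h => hv0 (Subtype.ext h)
  have hBu_mem : B *ᵥ u ∈ LinearMap.range B.mulVecLin := ⟨u, rfl⟩
  obtain ⟨c, hc⟩ := hv ⟨B *ᵥ u, hBu_mem⟩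
  have hc' : c • u = B *ᵥ u := congrArg Subtype.val hc
  obtain ⟨k, hk⟩ := hn
  have pow_mul : ∀ j : ℕ, (B ^ j) *ᵥ u = c ^ j • u := by
    intro j
    induction j with
    | zero => simp
    | succ n ih =>
      rw [pow_succ, ← Matrix.mulVec_mulVec, ← hc', Matrix.mulVec_smul, ih]
      rw [smul_smul, pow_succ]
      ring_nf
  have hck : c ^ k • u = 0 := by rw [← pow_mul, hk, Matrix.zero_mulVec]
  have hc0 : c = 0 := by
    by_contra h
    exact hu0 (by simpa [smul_eq_zero, h] using hck)
  have hBu : B *ᵥ u = 0 := by rw [← hc', hc0, zero_smul]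
  have key : ∀ x : Fin m → ℝ, (B * B) *ᵥ x = 0 := by
    intro x
    have hx : B *ᵥ x ∈ LinearMap.range B.mulVecLin := ⟨x, rfl⟩
    obtain ⟨d, hd⟩ := hv ⟨B *ᵥ x, hx⟩
    have hd' : d • u = B *ᵥ x := congrArg Subtype.val hd
    rw [← Matrix.mulVec_mulVec, ← hd', Matrix.mulVec_smul, hBu, smul_zero]
  ext i j
  have := congrFun (key (Pi.single j 1)) i
  simpa using this

/-- For any nonzero `B ∈ M_m(ℝ)`, `|[B,Bᵀ]| / |B|² ≤ √2`, with equality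
iff `B` is nilpotent of rank 1. -/
theorem stmt_10 (m : ℕ) (B : Matrix (Fin m) (Fin m) ℝ) (hB : B ≠ 0) :
    Real.sqrt (nsq (brk B Bᵀ)) / nsq B ≤ Real.sqrt 2 ∧
    (Real.sqrt (nsq (brk B Bᵀ)) / nsq B = Real.sqrt 2 ↔ IsNilpotent B ∧ B.rank = 1) := by
  classical
  set P : Matrix (Fin m) (Fin m) ℝ := B * Bᵀ with hPdef
  have hConj : Bᴴ = Bᵀ := Matrix.ext fun i j => rfl
  have hP : P.PosSemidef := by
    have := Matrix.posSemidef_self_mul_conjTranspose B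
    rwa [hConj] at this
  have hH : P.IsHermitian := hP.1
  set lam : Fin m → ℝ := hH.eigenvalues with hlam
  have hlam0 : ∀ i, 0 ≤ lam i := hP.eigenvalues_nonneg
  obtain ⟨ht1, ht2⟩ := trace_herm P hH
  -- basic facts
  have hnsqB : nsq B = P.trace := rfl
  have hnsqB_pos : 0 < nsq B := by
    rcases lt_or_eq_of_le (nsq_nonneg B) with h | h
    · exact h
    · exact absurd ((nsq_eq_zero_iff B).mp h.symm) hB
  have hs_pos : 0 < ∑ i, lam i := by rw [← ht1, ← hnsqB]; exact hnsqB_pos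
  have hsum_sq_le : ∑ i, lam i ^ 2 ≤ (∑ i, lam i) ^ 2 :=
    Finset.sum_sq_le_sq_sum_of_nonneg (fun i _ => hlam0 i)
  have hBB_nonneg : 0 ≤ nsq (B * B) := nsq_nonneg _
  have hid : nsq (brk B Bᵀ) = 2 * (∑ i, lam i ^ 2) - 2 * nsq (B * B) := by
    rw [brk_identity B, ← ht2]
  have hkey_le : nsq (brk B Bᵀ) ≤ 2 * (nsq B) ^ 2 := by
    rw [hid, hnsqB, ht1]; nlinarith
  have hbrk_nonneg : 0 ≤ nsq (brk B Bᵀ) := nsq_nonneg _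
  have hrankP : P.rank = B.rank := Matrix.rank_self_mul_transpose B
  have hrank_eigs : P.rank = Fintype.card {i // lam i ≠ 0} := hH.rank_eq_card_non_zero_eigs
  -- equality of sums iff rank one
  have hsum_iff : (∑ i, lam i ^ 2) = (∑ i, lam i) ^ 2 ↔ B.rank = 1 := by
    constructor
    · intro heq
      have hterm : ∀ i ∈ Finset.univ, (0:ℝ) ≤ lam i * ((∑ j, lam j) - lam i) := by
        intro i _
        have : lam i ≤ ∑ j, lam j :=
          Finset.single_le_sum (fun j _ => hlam0 j) (Finset.mem_univ i)
        have := hlam0 i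
        nlinarith
      have hzero : ∑ i, lam i * ((∑ j, lam j) - lam i) = 0 := by
        have : ∑ i, lam i * ((∑ j, lam j) - lam i)
            = (∑ i, lam i) ^ 2 - ∑ i, lam i ^ 2 := by
          simp only [mul_sub]
          rw [Finset.sum_sub_distrib, ← Finset.sum_mul, sq]
          congr 1
          exact Finset.sum_congr rfl fun i _ => by ring
        rw [this, heq]; ring
      have hall := (Finset.sum_eq_zero_iff_of_nonneg hterm).mp hzero
      -- each lam i is 0 or equal to the total sum
      have halt : ∀ i, lam i = 0 ∨ lam i = ∑ j, lam j := by
        intro i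
        have := hall i (Finset.mem_univ i)
        rcases mul_eq_zero.mp this with h | h
        · exact Or.inl h
        · exact Or.inr (by linarith)
      -- there is a nonzero eigenvalue
      have hex : ∃ i, lam i ≠ 0 := by
        by_contra h
        push_neg at h
        have : (∑ i, lam i) = 0 := Finset.sum_eq_zero fun i _ => h i
        linarith
      obtain ⟨i₀, hi₀⟩ := hex
      have hcard : Fintype.card {i // lam i ≠ 0} = 1 := by
        rw [Fintype.card_eq_one_iff]
        refine ⟨⟨i₀, hi₀⟩, ?_⟩
        rintro ⟨j, hj⟩
        refine Subtype.ext ?_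
        show j = i₀
        by_contra hne
        have hji : lam j = ∑ k, lam k := (halt j).resolve_left hj
        have hii : lam i₀ = ∑ k, lam k := (halt i₀).resolve_left hi₀
        have hle : lam j + lam i₀ ≤ ∑ k, lam k := by
          have hsub : ({j, i₀} : Finset (Fin m)) ⊆ Finset.univ := Finset.subset_univ _
          have := Finset.sum_le_sum_of_subset_of_nonneg hsub
            (fun k _ _ => hlam0 k)
          rwa [Finset.sum_pair hne] at this
        have : lam i₀ ≤ 0 := by linarith
        exact hi₀ (le_antisymm this (hlam0 i₀))
      rw [← hrankP, hrank_eigs, hcard]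
    · intro hr
      have hcard : Fintype.card {i // lam i ≠ 0} = 1 := by
        rw [← hrank_eigs, hrankP, hr]
      obtain ⟨⟨i₀, hi₀⟩, huniq⟩ := Fintype.card_eq_one_iff.mp hcard
      have hzero : ∀ j, j ≠ i₀ → lam j = 0 := by
        intro j hj
        by_contra h
        exact hj (congrArg Subtype.val (huniq ⟨j, h⟩))
      have h1 : (∑ i, lam i) = lam i₀ :=
        Finset.sum_eq_single i₀ (fun j _ hj => hzero j hj) (fun h => absurd (Finset.mem_univ i₀) h)
      have h2 : (∑ i, lam i ^ 2) = lam i₀ ^ 2 :=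
        Finset.sum_eq_single i₀ (fun j _ hj => by rw [hzero j hj]; ring)
          (fun h => absurd (Finset.mem_univ i₀) h)
      rw [h1, h2]
  -- equality of the ratio iff nsq equality
  have hratio_iff : Real.sqrt (nsq (brk B Bᵀ)) / nsq B = Real.sqrt 2
      ↔ nsq (brk B Bᵀ) = 2 * (nsq B) ^ 2 := by
    rw [div_eq_iff (ne_of_gt hnsqB_pos)]
    constructor
    · intro h
      have := congrArg (fun x : ℝ => x ^ 2) h
      simp only [mul_pow, Real.sq_sqrt hbrk_nonneg, Real.sq_sqrt (by norm_num : (0:ℝ) ≤ 2)] at this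
      linarith
    · intro h
      rw [h, show 2 * (nsq B)^2 = (Real.sqrt 2 * nsq B)^2 by
        rw [mul_pow, Real.sq_sqrt (by norm_num : (0:ℝ) ≤ 2)],
        Real.sqrt_sq (by positivity)]
  -- main equality characterization
  have hmain : nsq (brk B Bᵀ) = 2 * (nsq B) ^ 2 ↔ IsNilpotent B ∧ B.rank = 1 := by
    rw [hid, hnsqB, ht1]
    constructor
    · intro h
      have h1 : nsq (B * B) = 0 := by nlinarith
      have h2 : (∑ i, lam i ^ 2) = (∑ i, lam i) ^ 2 := by nlinarith
      have hBB : B * B = 0 := (nsq_eq_zero_iff _).mp h1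
      refine ⟨⟨2, by rw [pow_two]; exact hBB⟩, hsum_iff.mp h2⟩
    · rintro ⟨hn, hr⟩
      have hBB : B * B = 0 := sq_zero_of_nilpotent_rank_one B hn hr
      have h1 : nsq (B * B) = 0 := (nsq_eq_zero_iff _).mpr hBB
      have h2 : (∑ i, lam i ^ 2) = (∑ i, lam i) ^ 2 := hsum_iff.mpr hr
      rw [h1, h2]; ring
  constructor
  · rw [div_le_iff₀ hnsqB_pos]
    have : Real.sqrt (nsq (brk B Bᵀ)) ≤ Real.sqrt (2 * (nsq B)^2) :=
      Real.sqrt_le_sqrt hkey_le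
    calc Real.sqrt (nsq (brk B Bᵀ)) ≤ Real.sqrt (2 * (nsq B)^2) := this
      _ = Real.sqrt 2 * nsq B := by
          rw [Real.sqrt_mul (by norm_num : (0:ℝ) ≤ 2), Real.sqrt_sq (le_of_lt hnsqB_pos)]
  · exact hratio_iff.trans hmain
end

section
/- If A ∈ M_m(ℝ) is normal, B ∈ M_m(ℝ), and [B,A] = [C,A] for some skew-symmetric C, then [S(B),A] = 0. -/
open Matrix

lemma trace_mul_transpose_self_eq_zero {m : ℕ} (X : Matrix (Fin m) (Fin m) ℝ)
    (h : (X * Xᵀ).trace = 0) : X = 0 := by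
  have htr : (X * Xᵀ).trace = ∑ i, ∑ j, X i j ^ 2 := by
    simp [Matrix.trace, Matrix.mul_apply, Matrix.diag, sq]
  rw [htr] at h
  ext i j
  have h1 : ∀ i ∈ Finset.univ, (0:ℝ) ≤ ∑ j, X i j ^ 2 := fun i _ =>
    Finset.sum_nonneg fun j _ => sq_nonneg _
  have h2 := (Finset.sum_eq_zero_iff_of_nonneg h1).mp h i (Finset.mem_univ i)
  have h3 := (Finset.sum_eq_zero_iff_of_nonneg (fun j _ => sq_nonneg (X i j))).mp h2 j
    (Finset.mem_univ j)
  simpa using pow_eq_zero_iff (n := 2) (by norm_num) |>.mp h3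

/-- If `A ∈ M_m(ℝ)` is normal, and `[B,A] = [C,A]` for some skew-symmetric
`C`, then `[S(B),A] = 0`. -/
theorem stmt_16 (m : ℕ) (A B C : Matrix (Fin m) (Fin m) ℝ)
    (hA : A * Aᵀ = Aᵀ * A) (hskew : Cᵀ = -C) (h : brk B A = brk C A) :
    brk (Ssym B) A = 0 := by
  set D := B - C with hD
  have hDA : D * A = A * D := by
    have : brk D A = 0 := by
      simp only [brk, hD, sub_mul, mul_sub] at h ⊢
      rw [sub_eq_zero]
      exact sub_eq_sub_iff_sub_eq_sub.mp h
    simpa [brk, sub_eq_zero] using this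
  -- Fuglede: Dᵀ commutes with A
  have hDtA : Dᵀ * A = A * Dᵀ := by
    set X := Dᵀ * A - A * Dᵀ with hX
    have key : (X * Xᵀ).trace = 0 := by
      have e : X * Xᵀ = Dᵀ*A*Aᵀ*D - Dᵀ*A*D*Aᵀ - A*Dᵀ*Aᵀ*D + A*Dᵀ*D*Aᵀ := by
        simp only [hX, Matrix.transpose_sub, Matrix.transpose_mul, Matrix.transpose_transpose]
        noncomm_ring
      rw [e]
      have t1 : (Dᵀ*A*Aᵀ*D).trace = (D*Dᵀ*(Aᵀ*A)).trace := by
        rw [show Dᵀ*A*Aᵀ*D = (Dᵀ*(A*Aᵀ))*D by noncomm_ring, Matrix.trace_mul_comm,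
          show D*(Dᵀ*(A*Aᵀ)) = D*Dᵀ*(A*Aᵀ) by noncomm_ring, hA]
      have t2 : (Dᵀ*A*D*Aᵀ).trace = (Dᵀ*D*(Aᵀ*A)).trace := by
        rw [show Dᵀ*A*D*Aᵀ = Dᵀ*(A*D)*Aᵀ by noncomm_ring, ← hDA,
          show Dᵀ*(D*A)*Aᵀ = Dᵀ*D*(A*Aᵀ) by noncomm_ring, hA]
      have t3 : (A*Dᵀ*Aᵀ*D).trace = (D*Dᵀ*(Aᵀ*A)).trace := by
        rw [show A*Dᵀ*Aᵀ*D = A*(Dᵀ*Aᵀ*D) by noncomm_ring, Matrix.trace_mul_comm,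
          show Dᵀ*Aᵀ*D*A = Dᵀ*Aᵀ*(D*A) by noncomm_ring, hDA,
          show Dᵀ*Aᵀ*(A*D) = (Dᵀ*(Aᵀ*A))*D by noncomm_ring, Matrix.trace_mul_comm,
          show D*(Dᵀ*(Aᵀ*A)) = D*Dᵀ*(Aᵀ*A) by noncomm_ring]
      have t4 : (A*Dᵀ*D*Aᵀ).trace = (Dᵀ*D*(Aᵀ*A)).trace := by
        rw [show A*Dᵀ*D*Aᵀ = A*(Dᵀ*D*Aᵀ) by noncomm_ring, Matrix.trace_mul_comm,
          show Dᵀ*D*Aᵀ*A = Dᵀ*D*(Aᵀ*A) by noncomm_ring]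
      simp only [Matrix.trace_add, Matrix.trace_sub, t1, t2, t3, t4]
      ring
    have hX0 : X = 0 := trace_mul_transpose_self_eq_zero X key
    rw [hX, sub_eq_zero] at hX0
    exact hX0
  have hBBt : B + Bᵀ = D + Dᵀ := by
    simp only [hD, Matrix.transpose_sub, hskew, sub_neg_eq_add]
    abel
  simp only [brk, Ssym, Matrix.smul_mul, Matrix.mul_smul, ← smul_sub]
  rw [hBBt]
  have : (D + Dᵀ) * A = A * (D + Dᵀ) := by
    rw [add_mul, mul_add, hDA, hDtA]
  rw [this, sub_self, smul_zero]
end
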